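/- Let n ≥ 1 and let σ be a congruence on P_n^Φ. For 0 ≤ q ≤ n define θ_q := {(i,j) ∈ ℕ × ℕ : ((i,α),(j,α)) ∈ σ for some α ∈ D_q}. Then θ_q = {(i,j) ∈ ℕ × ℕ : ((i,α),(j,α)) ∈ σ for all α ∈ D_q}, each θ_q is a congruence on the additive monoid (ℕ,+), and θ_0 ⊇ θ_1 ⊇ ⋯ ⊇ θ_n. -/

import Mathlib

namespace TPM

/-- Vertex set `{1,…,n} ∪ {1',…,n'}`: `Sum.inl` = unprimed (upper row),
`Sum.inr` = primed (lower row). -/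
abbrev V (n : ℕ) := Fin n ⊕ Fin n

/-- The partition monoid `P_n`: set partitions of the `2n`-element set `V n`,
encoded as equivalence relations (setoids). -/
abbrev PM (n : ℕ) := Setoid (V n)

/-- Three-row vertex set of the product graph: top / middle / bottom. -/
abbrev W (n : ℕ) := Fin n ⊕ (Fin n ⊕ Fin n)

variable {n : ℕ}

/-- First factor: unprimed ↦ top, primed ↦ middle. -/
def topMid : V n → W n
  | Sum.inl i => Sum.inl i
  | Sum.inr i => Sum.inr (Sum.inl i)

/-- Second factor: unprimed ↦ middle, primed ↦ bottom. -/
def midBot : V n → W n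
  | Sum.inl i => Sum.inr (Sum.inl i)
  | Sum.inr i => Sum.inr (Sum.inr i)

/-- Embedding of `V n` as top and bottom rows of the three-row set. -/
def topBot : V n → W n
  | Sum.inl i => Sum.inl i
  | Sum.inr i => Sum.inr (Sum.inr i)

/-- Edge relation of the product graph `Γ(α,β)`. -/
def graphRel (α β : PM n) (x y : W n) : Prop :=
  (∃ u v : V n, α.r u v ∧ x = topMid u ∧ y = topMid v) ∨
  (∃ u v : V n, β.r u v ∧ x = midBot u ∧ y = midBot v)

/-- Connectivity (equivalence closure of the edge relation) in `Γ(α,β)`. -/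
def conn (α β : PM n) : W n → W n → Prop := Relation.EqvGen (graphRel α β)

/-- Connectivity in `Γ(α,β)`, as a setoid on the three-row vertex set. -/
def connSetoid (α β : PM n) : Setoid (W n) :=
  ⟨conn α β, Relation.EqvGen.is_equivalence _⟩

/-- The product of two partitions: `x,y` lie in the same block of `αβ` iff they are
connected in `Γ(α,β)`. -/
def pmul (α β : PM n) : PM n :=
  ⟨fun x y => conn α β (topBot x) (topBot y),
    ⟨fun _ => Relation.EqvGen.refl _, fun h => Relation.EqvGen.symm _ _ h, fun h h' => Relation.EqvGen.trans _ _ _ h h'⟩⟩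

/-- A vertex of the three-row set lies in the middle row. -/
def isMid (x : W n) : Prop := ∃ i : Fin n, x = Sum.inr (Sum.inl i)

/-- `Φ(α,β)`: the number of floating components of `Γ(α,β)`, i.e. connected components
all of whose vertices lie in the middle row. -/
noncomputable def Phi (α β : PM n) : ℕ :=
  Nat.card {c : Quotient (connSetoid α β) //
    ∀ x : W n, Quotient.mk (connSetoid α β) x = c → isMid x}

/-- The rank of a partition: the number of transversal blocks (blocks containing both an
unprimed and a primed element). -/
noncomputable def rnk (α : PM n) : ℕ :=
  Nat.card {c : Quotient α //
    (∃ i : Fin n, Quotient.mk α (Sum.inl i) = c) ∧ ∃ i : Fin n, Quotient.mk α (Sum.inr i) = c}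

/-- Which row of `V n` a point lies in. -/
def side : V n → Bool
  | Sum.inl _ => true
  | Sum.inr _ => false

/-- `α̂`: split each transversal of `α` into its unprimed part and its primed part. -/
def hat (α : PM n) : PM n :=
  ⟨fun x y => α.r x y ∧ side x = side y,
    ⟨fun x => ⟨α.iseqv.refl x, rfl⟩,
     fun h => ⟨α.iseqv.symm h.1, h.2.symm⟩,
     fun h h' => ⟨α.iseqv.trans h.1 h'.1, h.2.trans h'.2⟩⟩⟩

/-- The twisted product on `ℕ × P_n`:  `(i,α)(j,β) = (i + j + Φ(α,β), αβ)`. -/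
noncomputable def tmul (a b : ℕ × PM n) : ℕ × PM n :=
  (a.1 + b.1 + Phi a.2 b.2, pmul a.2 b.2)

/-- A congruence on a set equipped with a binary operation: an equivalence relation
compatible with the operation on both sides. -/
def IsCongruence {M : Type*} (mul : M → M → M) (σ : M → M → Prop) : Prop :=
  Equivalence σ ∧ ∀ x y a, σ x y → σ (mul a x) (mul a y) ∧ σ (mul x a) (mul y a)

/-- Green's relation `R`: equality of the right ideals `xM = yM`. -/
def greenR {M : Type*} (mul : M → M → M) (x y : M) : Prop :=
  Set.range (mul x) = Set.range (mul y)

/-- Green's relation `L`: `Mx = My`. -/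
def greenL {M : Type*} (mul : M → M → M) (x y : M) : Prop :=
  Set.range (fun a => mul a x) = Set.range (fun a => mul a y)

/-- The principal two-sided ideal `MxM`. -/
def jSet {M : Type*} (mul : M → M → M) (x : M) : Set M :=
  Set.range (fun p : M × M => mul (mul p.1 x) p.2)

/-- Green's relation `J`: `MxM = MyM`. -/
def greenJ {M : Type*} (mul : M → M → M) (x y : M) : Prop :=
  jSet mul x = jSet mul y

/-- Green's relation `H = R ∩ L`. -/
def greenH {M : Type*} (mul : M → M → M) (x y : M) : Prop :=
  greenR mul x y ∧ greenL mul x y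

/-- Green's relation `D = R ∘ L`. -/
def greenD {M : Type*} (mul : M → M → M) (x y : M) : Prop :=
  ∃ z, greenR mul x z ∧ greenL mul z y

/-- `pd(α,β)` satisfies `P`, where `α` has `p` transversals: there are representatives
`a s` of the upper parts of the `p` (pairwise distinct) transversals of `α`, with `b s`
representing the corresponding lower parts, and a permutation `π` with `P π` such that the
block of `β` containing `a s` contains `b (π s)`.  (For H-related `α, β ∈ D_p` this says
exactly that some representation of the permutational difference `pd(α,β)` satisfies `P`.) -/
def pdIn (p : ℕ) (P : Equiv.Perm (Fin p) → Prop) (α β : PM n) : Prop :=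
  ∃ (a b : Fin p → Fin n) (π : Equiv.Perm (Fin p)),
    (∀ s t, α.r (Sum.inl (a s)) (Sum.inl (a t)) → s = t) ∧
    (∀ s, α.r (Sum.inl (a s)) (Sum.inr (b s))) ∧
    (∀ s, β.r (Sum.inl (a s)) (Sum.inr (b (π s)))) ∧
    P π

/-- The relation `ν_N` on `D_p`, for a subgroup `N ≤ S_p`:  H-related pairs of rank-`p`
partitions whose permutational difference lies in `N`. -/
def nuRel (p : ℕ) (N : Subgroup (Equiv.Perm (Fin p))) (α β : PM n) : Prop :=
  rnk α = p ∧ rnk β = p ∧ greenH pmul α β ∧ pdIn p (· ∈ N) α β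

/-- The congruence `(m, m+d)^♯` on the additive monoid `ℕ` (intended for `d ≥ 1`). -/
def natCong (m d : ℕ) (i j : ℕ) : Prop :=
  i = j ∨ (m ≤ i ∧ m ≤ j ∧ i % d = j % d)

/-- `min θ ≤ i` for a congruence `θ` on `ℕ` (with `min Δ_ℕ = ∞`). -/
def minLE (θ : ℕ → ℕ → Prop) (i : ℕ) : Prop :=
  ∃ a b, θ a b ∧ a ≠ b ∧ a ≤ i

/-- `k ≤ min θ` for a congruence `θ` on `ℕ` (with `min Δ_ℕ = ∞`). -/
def leMin (k : ℕ) (θ : ℕ → ℕ → Prop) : Prop :=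
  ∀ a b, θ a b → a ≠ b → k ≤ a

/-- The possible entries of a C-matrix. -/
inductive CEntry : Type
  | delta | muUp | muDown | mu | lam | rho | R
  | nsym (q : ℕ) (N : Subgroup (Equiv.Perm (Fin q)))

/-- Whether a C-matrix entry is an N-symbol. -/
def isNsym : CEntry → Prop
  | CEntry.nsym _ _ => True
  | _ => False

/-- The allowed values of the symbol `ζ` in row types RT2, RT5, RT6. -/
def isZeta (e : CEntry) : Prop :=
  e = CEntry.mu ∨ e = CEntry.muUp ∨ e = CEntry.muDown ∨ e = CEntry.delta

/-- The allowed values of the symbol `ξ` in row types RT4–RT7: any of `μ,ρ,λ,R` if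
`d = 1`, and only `μ` if `d > 1`. -/
def xiOK (d : ℕ) (e : CEntry) : Prop :=
  e = CEntry.mu ∨ (d = 1 ∧ (e = CEntry.rho ∨ e = CEntry.lam ∨ e = CEntry.R))

/-- Row type RT1 for rows 0 and 1: all entries `Δ`. -/
def RT1 (M0 M1 : ℕ → CEntry) : Prop :=
  (∀ i, M0 i = CEntry.delta) ∧ (∀ i, M1 i = CEntry.delta)

/-- Row type RT2. -/
def RT2 (Θ0 Θ1 : ℕ → ℕ → Prop) (M0 M1 : ℕ → CEntry) : Prop :=
  Θ0 = Eq ∧ Θ1 = Eq ∧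
  ∃ i ζ, isZeta ζ ∧
    (∀ j, j < i → M0 j = CEntry.delta) ∧ (∀ j, i ≤ j → M0 j = CEntry.mu) ∧
    (∀ j, j < i → M1 j = CEntry.delta) ∧ M1 i = ζ ∧ (∀ j, i < j → M1 j = CEntry.mu)

/-- Row type RT3. -/
def RT3 (Θ0 : ℕ → ℕ → Prop) (M0 M1 : ℕ → CEntry) : Prop :=
  ∃ m ξ, Θ0 = natCong m 1 ∧ (ξ = CEntry.rho ∨ ξ = CEntry.lam ∨ ξ = CEntry.R) ∧
    (∀ i, M1 i = CEntry.delta) ∧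
    (∀ j, j < m → M0 j = CEntry.delta) ∧ (∀ j, m ≤ j → M0 j = ξ)

/-- Row type RT4. -/
def RT4 (Θ0 Θ1 : ℕ → ℕ → Prop) (M0 M1 : ℕ → CEntry) : Prop :=
  ∃ m d ξ, 1 ≤ d ∧ Θ0 = natCong m d ∧ Θ1 = natCong m d ∧ xiOK d ξ ∧
    (∀ j, j < m → M0 j = CEntry.delta ∧ M1 j = CEntry.delta) ∧
    (∀ j, m ≤ j → M0 j = ξ ∧ M1 j = ξ)

/-- Row type RT5. -/
def RT5 (Θ0 Θ1 : ℕ → ℕ → Prop) (M0 M1 : ℕ → CEntry) : Prop :=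
  ∃ m d i ξ ζ, 1 ≤ d ∧ i < m ∧ Θ0 = natCong m d ∧ Θ1 = natCong (m + 1) d ∧
    xiOK d ξ ∧ isZeta ζ ∧
    (∀ j, j < i → M0 j = CEntry.delta) ∧ (∀ j, i ≤ j → j < m → M0 j = CEntry.mu) ∧
    (∀ j, m ≤ j → M0 j = ξ) ∧
    (∀ j, j < i → M1 j = CEntry.delta) ∧ M1 i = ζ ∧
    (∀ j, i < j → j ≤ m → M1 j = CEntry.mu) ∧ (∀ j, m < j → M1 j = ξ)

/-- Row type RT6. -/
def RT6 (Θ0 Θ1 : ℕ → ℕ → Prop) (M0 M1 : ℕ → CEntry) : Prop :=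
  ∃ m l d ξ ζ, 1 ≤ d ∧ m < l ∧ Θ0 = natCong m d ∧ Θ1 = natCong l d ∧
    xiOK d ξ ∧ isZeta ζ ∧
    (∀ j, j < m → M0 j = CEntry.delta) ∧ (∀ j, m ≤ j → M0 j = ξ) ∧
    (∀ j, j < l - 1 → M1 j = CEntry.delta) ∧ M1 (l - 1) = ζ ∧ (∀ j, l ≤ j → M1 j = ξ)

/-- Row type RT7. -/
def RT7 (Θ0 Θ1 : ℕ → ℕ → Prop) (M0 M1 : ℕ → CEntry) : Prop :=
  ∃ m l d ξ, 1 ≤ d ∧ 0 < m ∧ m + 1 < l ∧ (l - 1) % d = m % d ∧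
    Θ0 = natCong m d ∧ Θ1 = natCong l d ∧ xiOK d ξ ∧
    (∀ j, j < m - 1 → M0 j = CEntry.delta) ∧ M0 (m - 1) = CEntry.mu ∧
    (∀ j, m ≤ j → M0 j = ξ) ∧
    (∀ j, j < l - 1 → M1 j = CEntry.delta) ∧ M1 (l - 1) = CEntry.mu ∧
    (∀ j, l ≤ j → M1 j = ξ)

/-- Row type RT8 for a row `q ≥ 2`: all entries `Δ`. -/
def RT8 (Mq : ℕ → CEntry) : Prop := ∀ i, Mq i = CEntry.delta

/-- Row type RT9 for a row `q ≥ 2`. -/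
def RT9 (q : ℕ) (Θq : ℕ → ℕ → Prop) (Mq : ℕ → CEntry) : Prop :=
  ∃ (i k : ℕ) (Ns : ℕ → Subgroup (Equiv.Perm (Fin q))),
    i ≤ k ∧ leMin k Θq ∧
    (∀ j, i ≤ j → j ≤ k → Ns j ≠ ⊥ ∧ (Ns j).Normal) ∧
    (∀ j j', i ≤ j → j ≤ j' → j' ≤ k → Ns j ≤ Ns j') ∧
    (∀ j, j < i → Mq j = CEntry.delta) ∧
    (∀ j, i ≤ j → j < k → Mq j = CEntry.nsym q (Ns j)) ∧
    (∀ j, k ≤ j → Mq j = CEntry.nsym q (Ns k))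

/-- Row type RT10 for a row `q ≥ 2`. -/
def RT10 (q : ℕ) (Θq : ℕ → ℕ → Prop) (Mq : ℕ → CEntry) : Prop :=
  ∃ (i m : ℕ) (Ns : ℕ → Subgroup (Equiv.Perm (Fin q))),
    i ≤ m ∧ Θq = natCong m 1 ∧
    (∀ j, i ≤ j → j < m → Ns j ≠ ⊥ ∧ (Ns j).Normal) ∧
    (∀ j j', i ≤ j → j ≤ j' → j' < m → Ns j ≤ Ns j') ∧
    (∀ j, j < i → Mq j = CEntry.delta) ∧
    (∀ j, i ≤ j → j < m → Mq j = CEntry.nsym q (Ns j)) ∧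
    (∀ j, m ≤ j → Mq j = CEntry.R)

/-- A C-pair for `P_n^Φ`: a descending chain `Θ = (θ_0 ⊇ ⋯ ⊇ θ_n)` of congruences on
`(ℕ,+)` together with a matrix `M = (M_{qi})`, `0 ≤ q ≤ n`, `i ∈ ℕ`, whose rows 0 and 1
jointly have one of the types RT1–RT7, whose rows `q ≥ 2` have one of the types RT8–RT10,
and which satisfies the verticality conditions (V1) and (V2). -/
def IsCPair (n : ℕ) (Θ : ℕ → ℕ → ℕ → Prop) (M : ℕ → ℕ → CEntry) : Prop :=
  (∀ q, q ≤ n → IsCongruence (· + ·) (Θ q)) ∧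
  (∀ q r, q ≤ r → r ≤ n → ∀ i j, Θ r i j → Θ q i j) ∧
  (RT1 (M 0) (M 1) ∨ RT2 (Θ 0) (Θ 1) (M 0) (M 1) ∨ RT3 (Θ 0) (M 0) (M 1) ∨
    RT4 (Θ 0) (Θ 1) (M 0) (M 1) ∨ RT5 (Θ 0) (Θ 1) (M 0) (M 1) ∨
    RT6 (Θ 0) (Θ 1) (M 0) (M 1) ∨ RT7 (Θ 0) (Θ 1) (M 0) (M 1)) ∧
  (∀ q, 2 ≤ q → q ≤ n → (RT8 (M q) ∨ RT9 q (Θ q) (M q) ∨ RT10 q (Θ q) (M q))) ∧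
  (∀ q i, 1 ≤ q → q ≤ n → isNsym (M q i) →
    ¬(M (q - 1) i = CEntry.delta ∨ M (q - 1) i = CEntry.muUp ∨
      M (q - 1) i = CEntry.muDown ∨ isNsym (M (q - 1) i))) ∧
  (∀ q i, 2 ≤ q → q ≤ n → M q i = CEntry.R → M (q - 1) i = CEntry.R)

/-- The relation `cg(Θ,M)` on `P_n^Φ` associated with a C-pair `(Θ,M)`: conditions
(C1)–(C8). -/
def cg (n : ℕ) (Θ : ℕ → ℕ → ℕ → Prop) (M : ℕ → ℕ → CEntry)
    (a b : ℕ × PM n) : Prop :=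
  -- (C1)
  (M (rnk a.2) a.1 = CEntry.delta ∧ M (rnk b.2) b.1 = CEntry.delta ∧
    Θ (rnk a.2) a.1 b.1 ∧ a.2 = b.2) ∨
  -- (C2)
  (M (rnk a.2) a.1 = CEntry.R ∧ M (rnk b.2) b.1 = CEntry.R) ∨
  -- (C3)
  (∃ p N, M (rnk a.2) a.1 = CEntry.nsym p N ∧ M (rnk b.2) b.1 = CEntry.nsym p N ∧
    Θ (rnk a.2) a.1 b.1 ∧ rnk a.2 = p ∧ greenH pmul a.2 b.2 ∧ pdIn p (· ∈ N) a.2 b.2) ∨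
  -- (C4)
  (M (rnk a.2) a.1 = CEntry.lam ∧ M (rnk b.2) b.1 = CEntry.lam ∧
    greenL pmul (hat a.2) (hat b.2)) ∨
  -- (C5)
  (M (rnk a.2) a.1 = CEntry.rho ∧ M (rnk b.2) b.1 = CEntry.rho ∧
    greenR pmul (hat a.2) (hat b.2)) ∨
  -- (C6)
  (M (rnk a.2) a.1 = CEntry.muDown ∧ M (rnk b.2) b.1 = CEntry.muDown ∧
    hat a.2 = hat b.2 ∧ greenL pmul a.2 b.2) ∨
  -- (C7)
  (M (rnk a.2) a.1 = CEntry.muUp ∧ M (rnk b.2) b.1 = CEntry.muUp ∧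
    hat a.2 = hat b.2 ∧ greenR pmul a.2 b.2) ∨
  -- (C8)
  (M (rnk a.2) a.1 = CEntry.mu ∧ M (rnk b.2) b.1 = CEntry.mu ∧
    hat a.2 = hat b.2 ∧
    ((rnk a.2 = rnk b.2 ∧ Θ (rnk a.2) a.1 b.1) ∨
     (rnk a.2 ≠ rnk b.2 ∧ Θ 0 (a.1 + rnk b.2) (b.1 + rnk a.2) ∧
        ¬ minLE (Θ (rnk a.2)) a.1 ∧ ¬ minLE (Θ (rnk b.2)) b.1) ∨
     (rnk a.2 ≠ rnk b.2 ∧ Θ 0 (a.1 + rnk b.2) (b.1 + rnk a.2) ∧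
        minLE (Θ (rnk a.2)) a.1 ∧ minLE (Θ (rnk b.2)) b.1)))

/-- The C-pair `(Θ,M)` is exceptional with exceptional row `q`, where
`θ_q = (m, m+2d)^♯`. -/
def ExcAt (n : ℕ) (Θ : ℕ → ℕ → ℕ → Prop) (M : ℕ → ℕ → CEntry) (q m d : ℕ) : Prop :=
  2 ≤ q ∧ q ≤ n ∧ 1 ≤ d ∧ Θ q = natCong m (2 * d) ∧
  ((2 < q ∧ M q m = CEntry.nsym q (alternatingGroup (Fin q))) ∨
   (q = 2 ∧ M 2 m = CEntry.delta ∧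
     (M 1 m = CEntry.mu ∨ M 1 m = CEntry.rho ∨ M 1 m = CEntry.lam ∨ M 1 m = CEntry.R) ∧
     (∀ i j, natCong m d i j → Θ 1 i j)))

/-- The exceptional congruence `cgx(Θ,M)` associated with an exceptional C-pair:
`cg(Θ,M)` together with the pairs of (C9). -/
def cgx (n : ℕ) (Θ : ℕ → ℕ → ℕ → Prop) (M : ℕ → ℕ → CEntry) (q m d : ℕ)
    (a b : ℕ × PM n) : Prop :=
  cg n Θ M a b ∨
  (rnk a.2 = q ∧ rnk b.2 = q ∧ natCong m d a.1 b.1 ∧ ¬ Θ q a.1 b.1 ∧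
    greenH pmul a.2 b.2 ∧ pdIn q (fun π => π ∉ alternatingGroup (Fin q)) a.2 b.2)

/-- The Rees relation of a subset `I`. -/
def rees {M : Type*} (I : Set M) (x y : M) : Prop := x = y ∨ (x ∈ I ∧ y ∈ I)

/-- A (possibly empty) ideal of `P_n^Φ`: `MIM ⊆ I`. -/
def tIdeal (n : ℕ) (I : Set (ℕ × PM n)) : Prop :=
  ∀ a b x, x ∈ I → tmul (tmul a x) b ∈ I

/-- `I(σ)`: the union of all ideals `I` of `P_n^Φ` whose Rees congruence is contained
in `σ`. -/
def Isig (n : ℕ) (σ : (ℕ × PM n) → (ℕ × PM n) → Prop) : Set (ℕ × PM n) :=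
  ⋃₀ {I | tIdeal n I ∧ ∀ x y, rees I x y → σ x y}

/-- The 0-twisted partition monoid `P_{n,0}^Φ`, carried by `Option (P_n)` with
`none` the zero element `✗`. -/
noncomputable def mul0 (a b : Option (PM n)) : Option (PM n) :=
  match a, b with
  | some α, some β => if Phi α β = 0 then some (pmul α β) else none
  | _, _ => none

/-- `rank a ≤ q`, where `rank ✗ = -∞`. -/
def rnkLE (a : Option (PM n)) (q : ℕ) : Prop :=
  ∀ α, a = some α → rnk α ≤ q

/-- The Rees congruence `R_q` on `P_{n,0}^Φ`. -/
def ReesQ (q : ℕ) (a b : Option (PM n)) : Prop :=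
  a = b ∨ (rnkLE a q ∧ rnkLE b q)

/-- Lift a relation on `P_n` to `P_{n,0}^Φ = P_n ∪ {✗}`. -/
def lift2 (r : PM n → PM n → Prop) (a b : Option (PM n)) : Prop :=
  ∃ α β, a = some α ∧ b = some β ∧ r α β

/-!
If `rnk β ≤ rnk α` then `β = γαδ` with `Φ(γ, α) = Φ(γα, δ) = 0`. Multiplying a pair
`((i, α), (j, α)) ∈ σ` by `(c, γ)` on the left and by `(0, δ)` on the right therefore gives
`((c + i, β), (c + j, β)) ∈ σ`, and this transfer towards lower rank yields all three claims.

For the factorization fix an injection `e` of the transversals of `β` into those of `α`.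
The left factor `γ` carries the upper blocks of `β` and attaches the upper part of each block
`e t` to the upper part of `t`; every other upper block of `α` either reaches the lower row
inside `α` or is hung on an upper block of `β`, so that no floating component appears. Then
`γα` consists of the upper blocks of `β`, with the lower part of `e t` attached to `t`, and of
lower blocks of `α`; the right factor `δ` sends each of these lower blocks to a lower block of
`β`, namely to the lower part of `t` for the block coming from `e t`. Products are computed
through labellings of the three rows of the product graph that are constant along its edges.
-/

theorem conn_equivalence (α β : PM n) : Equivalence (conn α β) :=
  Relation.EqvGen.is_equivalence _

theorem conn_topMid {α β : PM n} {u v : V n} (h : α.r u v) : conn α β (topMid u) (topMid v) :=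
  Relation.EqvGen.rel _ _ (Or.inl ⟨u, v, h, rfl, rfl⟩)

theorem conn_midBot {α β : PM n} {u v : V n} (h : β.r u v) : conn α β (midBot u) (midBot v) :=
  Relation.EqvGen.rel _ _ (Or.inr ⟨u, v, h, rfl, rfl⟩)

section Labelling

variable {T : Type*} {α β : PM n} {t m b : Fin n → T}

theorem eq_of_conn (hα : ∀ u v, α.r u v → Sum.elim t m u = Sum.elim t m v)
    (hβ : ∀ u v, β.r u v → Sum.elim m b u = Sum.elim m b v) {x y : W n} (h : conn α β x y) :
    Sum.elim t (Sum.elim m b) x = Sum.elim t (Sum.elim m b) y := by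
  induction h with
  | rel x y hxy =>
    rcases hxy with ⟨u, v, huv, rfl, rfl⟩ | ⟨u, v, huv, rfl, rfl⟩
    · have := hα u v huv
      cases u <;> cases v <;> exact this
    · have := hβ u v huv
      cases u <;> cases v <;> exact this
  | refl => rfl
  | symm _ _ _ ih => exact ih.symm
  | trans _ _ _ _ _ ih₁ ih₂ => exact ih₁.trans ih₂

theorem pmul_eq_ker (hα : ∀ u v, α.r u v → Sum.elim t m u = Sum.elim t m v)
    (hβ : ∀ u v, β.r u v → Sum.elim m b u = Sum.elim m b v)
    (hconn : ∀ x y, Sum.elim t b x = Sum.elim t b y → conn α β (topBot x) (topBot y)) :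
    pmul α β = Setoid.ker (Sum.elim t b) := by
  ext x y
  refine ⟨fun h => ?_, hconn x y⟩
  have := eq_of_conn hα hβ h
  cases x <;> cases y <;> exact this

end Labelling

theorem phi_eq_zero {α β : PM n}
    (h : ∀ j, ∃ x : V n, conn α β (Sum.inr (Sum.inl j)) (topBot x)) : Phi α β = 0 := by
  refine Nat.card_eq_zero.mpr (Or.inl ⟨?_⟩)
  rintro ⟨c, hc⟩
  obtain ⟨w, rfl⟩ := Quotient.exists_rep c
  obtain ⟨j, rfl⟩ := hc w rfl
  obtain ⟨x, hx⟩ := h j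
  obtain ⟨_, hmid⟩ := hc (topBot x) (Quotient.sound ((conn_equivalence α β).symm hx))
  cases x <;> cases hmid

abbrev Transversal (α : PM n) : Type :=
  {c : Quotient α //
    (∃ i, Quotient.mk α (Sum.inl i) = c) ∧ ∃ i, Quotient.mk α (Sum.inr i) = c}

abbrev stdOfRank (q : ℕ) : PM n :=
  Setoid.ker fun x : V n =>
    if ((x.elim id id : Fin n) : ℕ) < q then Sum.inl (x.elim id id) else Sum.inr x

theorem stdOfRank_r_inl_inr {q : ℕ} {i j : Fin n} :
    (stdOfRank q).r (Sum.inl i) (Sum.inr j) ↔ i = j ∧ (i : ℕ) < q := by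
  show (if _ then _ else _) = (if _ then _ else _) ↔ _
  split_ifs <;> simp_all <;> rintro rfl <;> omega

theorem stdOfRank_r_inl_inl {q : ℕ} {i j : Fin n} (hi : (i : ℕ) < q)
    (hj : (j : ℕ) < q) (h : (stdOfRank q).r (Sum.inl i) (Sum.inl j)) : i = j := by
  change (if _ then _ else _) = (if _ then _ else _) at h
  simp_all

theorem rnk_stdOfRank {q : ℕ} (hq : q ≤ n) : rnk (stdOfRank (n := n) q) = q := by
  let f : Fin q → Transversal (stdOfRank (n := n) q) :=
    fun s => ⟨Quotient.mk _ (Sum.inl (Fin.castLE hq s)), ⟨_, rfl⟩,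
      ⟨Fin.castLE hq s, Quotient.sound
        ((stdOfRank q).iseqv.symm (stdOfRank_r_inl_inr.mpr ⟨rfl, s.isLt⟩))⟩⟩
  have hf : Function.Bijective f := by
    refine ⟨fun s s' h => Fin.castLE_injective hq ?_, ?_⟩
    · exact stdOfRank_r_inl_inl s.isLt s'.isLt (Quotient.exact (congrArg Subtype.val h))
    · rintro ⟨c, ⟨i, rfl⟩, ⟨j, hj⟩⟩
      obtain ⟨rfl, hi⟩ := stdOfRank_r_inl_inr.mp (Quotient.exact hj.symm)
      exact ⟨⟨i, hi⟩, rfl⟩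
  rw [rnk, ← Nat.card_eq_of_bijective f hf, Nat.card_fin]

theorem exists_embedding_transversal {α β : PM n} (h : rnk β ≤ rnk α) :
    Nonempty (Transversal β ↪ Transversal α) := by
  have := Fintype.ofFinite (Transversal α)
  have := Fintype.ofFinite (Transversal β)
  refine Function.Embedding.nonempty_of_card_le ?_
  simpa only [rnk, Nat.card_eq_fintype_card] using h

section Factorization

variable {α β : PM n} (e : Transversal β ↪ Transversal α)

open Classical in
/-- A block of `α` matched by `e` with a transversal of `β` is labelled by it, another block
meeting the lower row by one of its lower points, and an upper non-transversal block by the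
`β`-block of its representative, which is an upper point. -/
noncomputable def blockLabel (c : Quotient α) : Quotient β ⊕ Fin n :=
  if h : ∃ t, (e t).1 = c then Sum.inl h.choose.1
  else if h' : ∃ k, Quotient.mk α (Sum.inr k) = c then Sum.inr h'.choose
  else Sum.inl (Quotient.mk β c.out)

theorem blockLabel_embedding (t : Transversal β) : blockLabel e (e t).1 = Sum.inl t.1 := by
  have h : ∃ t', (e t').1 = (e t).1 := ⟨t, rfl⟩
  rw [blockLabel, dif_pos h, e.injective (Subtype.ext h.choose_spec)]

theorem blockLabel_eq_inr {c : Quotient α} {k : Fin n} (h : blockLabel e c = Sum.inr k) :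
    Quotient.mk α (Sum.inr k) = c := by
  unfold blockLabel at h
  split_ifs at h with h₁ h₂
  cases Sum.inr_injective h
  exact h₂.choose_spec

theorem blockLabel_eq_inl {c : Quotient α} {x : Quotient β} (h : blockLabel e c = Sum.inl x) :
    ∃ i, Quotient.mk β (Sum.inl i) = x := by
  unfold blockLabel at h
  split_ifs at h with h₁ h₂ <;> cases Sum.inl_injective h
  · exact h₁.choose.2.1
  · rcases hc : c.out with i | k
    · exact ⟨i, rfl⟩
    · exact absurd ⟨k, by rw [← hc, Quotient.out_eq]⟩ h₂

theorem blockLabel_eq_inl_of_lower {c : Quotient α} {x : Quotient β} {k : Fin n}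
    (h : blockLabel e c = Sum.inl x) (hk : Quotient.mk α (Sum.inr k) = c) :
    ∃ t, (e t).1 = c ∧ t.1 = x := by
  unfold blockLabel at h
  split_ifs at h with h₁ h₂
  · exact ⟨h₁.choose, h₁.choose_spec, Sum.inl_injective h⟩
  · exact absurd ⟨k, hk⟩ h₂

noncomputable def leftLabel : V n → Quotient β ⊕ Fin n :=
  Sum.elim (fun i => Sum.inl (Quotient.mk β (Sum.inl i)))
    fun j => blockLabel e (Quotient.mk α (Sum.inl j))

noncomputable def middleLabel : V n → Quotient β ⊕ Fin n :=
  Sum.elim (fun i => Sum.inl (Quotient.mk β (Sum.inl i)))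
    fun k => blockLabel e (Quotient.mk α (Sum.inr k))

def lowerClass (β : PM n) : Quotient β ⊕ Fin n → Quotient β :=
  Sum.elim id fun k => Quotient.mk β (Sum.inr k)

noncomputable def rightLabel : V n → Quotient β :=
  Sum.elim (fun j => lowerClass β (middleLabel e (Sum.inr j))) fun k => Quotient.mk β (Sum.inr k)

theorem phi_leftLabel : Phi (Setoid.ker (leftLabel e)) α = 0 := by
  refine phi_eq_zero fun j => ?_
  rcases h : blockLabel e (Quotient.mk α (Sum.inl j)) with x | k
  · obtain ⟨i, rfl⟩ := blockLabel_eq_inl e h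
    exact ⟨Sum.inl i, conn_topMid (u := Sum.inr j) (v := Sum.inl i) h⟩
  · exact ⟨Sum.inr k, conn_midBot (u := Sum.inl j) (v := Sum.inr k)
      (Quotient.exact (blockLabel_eq_inr e h).symm)⟩

theorem pmul_leftLabel : pmul (Setoid.ker (leftLabel e)) α = Setoid.ker (middleLabel e) := by
  refine pmul_eq_ker (m := fun j => blockLabel e (Quotient.mk α (Sum.inl j))) (fun _ _ h => h)
    (fun u v h => ?_) fun x y hxy => ?_
  · rcases u with u | u <;> rcases v with v | v <;>
      exact congrArg (blockLabel e) (Quotient.sound h)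
  have to_upper : ∀ z x₀, middleLabel e z = Sum.inl x₀ → ∃ p : V n,
      conn (Setoid.ker (leftLabel e)) α (topBot z) (topMid p) ∧
        leftLabel e p = Sum.inl x₀ := by
    rintro (i | k) x₀ h
    · exact ⟨Sum.inl i, Relation.EqvGen.refl _, h⟩
    obtain ⟨t, ht, -⟩ := blockLabel_eq_inl_of_lower e h rfl
    obtain ⟨j, hj⟩ := (e t).2.1
    refine ⟨Sum.inr j, conn_midBot (u := Sum.inr k) (v := Sum.inl j) ?_, ?_⟩
    · exact Quotient.exact (ht.symm.trans hj.symm)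
    · change blockLabel e _ = _
      rw [hj, ht]
      exact h
  have to_lower : ∀ z k, middleLabel e z = Sum.inr k →
      conn (Setoid.ker (leftLabel e)) α (topBot z) (Sum.inr (Sum.inr k)) := by
    rintro (i | k') k h
    · cases h
    · exact conn_midBot (u := Sum.inr k') (v := Sum.inr k)
        (Quotient.exact (blockLabel_eq_inr e h).symm)
  have hconn := conn_equivalence (Setoid.ker (leftLabel e)) α
  replace hxy : middleLabel e x = middleLabel e y := hxy
  rcases h : middleLabel e x with x₀ | k
  · obtain ⟨p, hxp, hp⟩ := to_upper x x₀ h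
    obtain ⟨p', hyp', hp'⟩ := to_upper y x₀ (hxy.symm.trans h)
    exact hconn.trans (hconn.trans hxp (conn_topMid (hp.trans hp'.symm))) (hconn.symm hyp')
  · exact hconn.trans (to_lower x k h) (hconn.symm (to_lower y k (hxy.symm.trans h)))

theorem phi_rightLabel : Phi (Setoid.ker (middleLabel e)) (Setoid.ker (rightLabel e)) = 0 := by
  refine phi_eq_zero fun j => ?_
  suffices ∃ k,
      lowerClass β (blockLabel e (Quotient.mk α (Sum.inr j))) = Quotient.mk β (Sum.inr k) by
    obtain ⟨k, hk⟩ := this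
    exact ⟨Sum.inr k, conn_midBot (u := Sum.inl j) (v := Sum.inr k) hk⟩
  rcases h : blockLabel e (Quotient.mk α (Sum.inr j)) with x | k
  · obtain ⟨t, -, rfl⟩ := blockLabel_eq_inl_of_lower e h rfl
    obtain ⟨k, hk⟩ := t.2.2
    exact ⟨k, hk.symm⟩
  · exact ⟨k, rfl⟩

theorem pmul_rightLabel : pmul (Setoid.ker (middleLabel e)) (Setoid.ker (rightLabel e)) = β := by
  have hconn := conn_equivalence (Setoid.ker (middleLabel e)) (Setoid.ker (rightLabel e))
  have anchor : ∀ t₀ : Transversal β, ∃ k₀, ∀ z : V n, Quotient.mk β z = t₀.1 →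
      conn (Setoid.ker (middleLabel e)) (Setoid.ker (rightLabel e)) (topBot z)
        (Sum.inr (Sum.inl k₀)) := by
    intro t₀
    obtain ⟨k₀, hk₀⟩ := (e t₀).2.2
    have hlabel : middleLabel e (Sum.inr k₀) = Sum.inl t₀.1 := by
      change blockLabel e _ = _
      rw [hk₀]
      exact blockLabel_embedding e t₀
    refine ⟨k₀, ?_⟩
    rintro (i | k) hz
    · exact conn_topMid (u := Sum.inl i) (v := Sum.inr k₀)
        ((congrArg Sum.inl hz).trans hlabel.symm)
    · refine hconn.symm (conn_midBot (u := Sum.inl k₀) (v := Sum.inr k) ?_)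
      change lowerClass β (middleLabel e (Sum.inr k₀)) = _
      rw [hlabel]
      exact hz.symm
  refine (pmul_eq_ker (α := Setoid.ker (middleLabel e)) (β := Setoid.ker (rightLabel e))
    (t := fun i => Quotient.mk β (Sum.inl i))
    (m := fun j => lowerClass β (middleLabel e (Sum.inr j)))
    (b := fun k => Quotient.mk β (Sum.inr k))
    (fun u v h => ?_) (fun _ _ h => h) ?_).trans ?_
  · rcases u with u | u <;> rcases v with v | v <;> exact congrArg (lowerClass β) h
  · rintro (i | k) (i' | k') h
    · exact conn_topMid (u := Sum.inl i) (v := Sum.inl i') (congrArg Sum.inl h)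
    · obtain ⟨k₀, hk₀⟩ := anchor ⟨_, ⟨i, rfl⟩, ⟨k', h.symm⟩⟩
      exact hconn.trans (hk₀ (Sum.inl i) rfl) (hconn.symm (hk₀ (Sum.inr k') h.symm))
    · obtain ⟨k₀, hk₀⟩ := anchor ⟨_, ⟨i', rfl⟩, ⟨k, h⟩⟩
      exact hconn.trans (hk₀ (Sum.inr k) h) (hconn.symm (hk₀ (Sum.inl i') rfl))
    · exact conn_midBot (u := Sum.inr k) (v := Sum.inr k') h
  · ext x y
    cases x <;> cases y <;> exact Quotient.eq

end Factorization

theorem exists_factorization {α β : PM n} (h : rnk β ≤ rnk α) :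
    ∃ γ δ : PM n, Phi γ α = 0 ∧ Phi (pmul γ α) δ = 0 ∧ pmul (pmul γ α) δ = β := by
  obtain ⟨e⟩ := exists_embedding_transversal h
  refine ⟨Setoid.ker (leftLabel e), Setoid.ker (rightLabel e), phi_leftLabel e, ?_, ?_⟩
  · rw [pmul_leftLabel]
    exact phi_rightLabel e
  · rw [pmul_leftLabel]
    exact pmul_rightLabel e

theorem IsCongruence.add_of_rnk_le {σ : ℕ × PM n → ℕ × PM n → Prop}
    (hσ : IsCongruence tmul σ) {α β : PM n} (hr : rnk β ≤ rnk α) {i j : ℕ}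
    (h : σ (i, α) (j, α)) (c : ℕ) : σ (c + i, β) (c + j, β) := by
  obtain ⟨γ, δ, hγ, hδ, rfl⟩ := exists_factorization hr
  have := (hσ.2 _ _ (0, δ) (hσ.2 _ _ (c, γ) h).1).2
  simpa only [tmul, hγ, hδ, add_zero] using this

theorem theta_chain_general (n : ℕ)
    (σ : (ℕ × PM n) → (ℕ × PM n) → Prop) (hσ : IsCongruence (tmul (n := n)) σ)
    (θ : ℕ → ℕ → ℕ → Prop)
    (hθ : θ = fun q i j => ∃ α : PM n, rnk α = q ∧ σ (i, α) (j, α)) :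
    (∀ q, q ≤ n → ∀ i j, θ q i j ↔ ∀ α : PM n, rnk α = q → σ (i, α) (j, α)) ∧
    (∀ q, q ≤ n → IsCongruence (· + ·) (θ q)) ∧
    (∀ q r, q ≤ r → r ≤ n → ∀ i j, θ r i j → θ q i j) := by
  subst hθ
  have transfer {α β : PM n} (hr : rnk β ≤ rnk α) {i j : ℕ} (h : σ (i, α) (j, α)) :
      σ (i, β) (j, β) := by
    simpa only [zero_add] using hσ.add_of_rnk_le hr h 0
  refine ⟨fun q hq i j => ⟨?_, fun h => ⟨_, rnk_stdOfRank hq, h _ (rnk_stdOfRank hq)⟩⟩,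
    fun q hq => ⟨⟨fun i => ⟨_, rnk_stdOfRank hq, hσ.1.refl _⟩, ?_, ?_⟩, ?_⟩, ?_⟩
  · rintro ⟨α, rfl, h⟩ β hβ
    exact transfer hβ.le h
  · rintro i j ⟨α, hα, h⟩
    exact ⟨α, hα, hσ.1.symm h⟩
  · rintro i j k ⟨α, hα, h⟩ ⟨α', hα', h'⟩
    exact ⟨α, hα, hσ.1.trans h (transfer (hα.trans hα'.symm).le h')⟩
  · rintro i j c ⟨α, hα, h⟩
    refine ⟨⟨α, hα, hσ.add_of_rnk_le le_rfl h c⟩, ⟨α, hα, ?_⟩⟩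
    simpa only [add_comm] using hσ.add_of_rnk_le le_rfl h c
  · rintro q r hqr hrn i j ⟨α, rfl, h⟩
    have hq := rnk_stdOfRank (n := n) (hqr.trans hrn)
    exact ⟨_, hq, transfer (hq.trans_le hqr) h⟩

/-- For a congruence `σ` on `P_n^Φ` and `θ_q` the relation
`{(i,j) : ((i,α),(j,α)) ∈ σ for some α ∈ D_q}`: the "some" and "all" versions coincide,
each `θ_q` (for `q ≤ n`) is a congruence on `(ℕ,+)`, and `θ_0 ⊇ θ_1 ⊇ ⋯ ⊇ θ_n`. -/
theorem theta_chain (n : ℕ) (hn : 1 ≤ n)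
    (σ : (ℕ × PM n) → (ℕ × PM n) → Prop) (hσ : IsCongruence (tmul (n := n)) σ)
    (θ : ℕ → ℕ → ℕ → Prop)
    (hθ : θ = fun q i j => ∃ α : PM n, rnk α = q ∧ σ (i, α) (j, α)) :
    (∀ q, q ≤ n → ∀ i j, θ q i j ↔ ∀ α : PM n, rnk α = q → σ (i, α) (j, α)) ∧
    (∀ q, q ≤ n → IsCongruence (· + ·) (θ q)) ∧
    (∀ q r, q ≤ r → r ≤ n → ∀ i j, θ r i j → θ q i j) :=
  theta_chain_general n σ hσ θ hθ

end TPM
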